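/- arXiv:1808.04172 — 3 statements merged into one kernel-verified Lean document; each statement's English description precedes it below -/
import Mathlib

section
/- Let G be a combinatorial Gauss diagram and let G' be obtained from G by an adjacent endpoint swap involving two distinct chords c and d. Then c is odd in G' if and only if c is even in G, d is odd in G' if and only if d is even in G, and every chord other than c and d is odd in G' if and only if it is odd in G. -/
open scoped Classical

/-- The cyclically next position on a circle of `m` marked points. -/
def nextPos {m : ℕ} (p : Fin m) : Fin m :=
  ⟨(p.val + 1) % m, Nat.mod_lt _ p.pos⟩

/-- `Inside a b x` : the point `x` lies strictly inside the cyclic interval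
running from `a` (forward) to `b`. -/
def Inside {m : ℕ} (a b x : Fin m) : Prop :=
  0 < (x - a).val ∧ (x - a).val < (b - a).val

/-- A combinatorial Gauss diagram with `n` chords: a bijection assigning to each
chord its two endpoints among `2 * n` cyclically ordered points, together with a
sign function taking values in `{-1, 1}`. -/
structure GaussDiagram (n : ℕ) where
  endpoint : Fin n × Bool ≃ Fin (2 * n)
  sign : Fin n → ℤ
  sign_pm : ∀ c, sign c = 1 ∨ sign c = -1

/-- Two chords are interlinked if exactly one endpoint of `d` lies strictly inside
the cyclic interval from `endpoint (c, false)` to `endpoint (c, true)`. -/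
def Interlinked {n : ℕ} (G : GaussDiagram n) (c d : Fin n) : Prop :=
  Xor'
    (Inside (G.endpoint (c, false)) (G.endpoint (c, true)) (G.endpoint (d, false)))
    (Inside (G.endpoint (c, false)) (G.endpoint (c, true)) (G.endpoint (d, true)))

/-- A chord is odd if it is interlinked with an odd number of other chords. -/
def OddChord {n : ℕ} (G : GaussDiagram n) (c : Fin n) : Prop :=
  Odd ((Finset.univ.filter fun d => d ≠ c ∧ Interlinked G c d).card)

/-- The odd writhe: the sum of the signs of the odd chords. -/
noncomputable def oddWrithe {n : ℕ} (G : GaussDiagram n) : ℤ :=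
  ∑ c ∈ Finset.univ.filter (fun c => OddChord G c), G.sign c

/-- `AdjSwap G G' p c d` : `G'` is obtained from `G` by the adjacent endpoint swap at
the cyclically adjacent positions `p`, `p+1`, which are occupied by endpoints of the
two distinct chords `c` and `d`; all signs are unchanged. -/
def AdjSwap {n : ℕ} (G G' : GaussDiagram n) (p : Fin (2 * n)) (c d : Fin n) : Prop :=
  c ≠ d ∧ (G.endpoint.symm p).1 = c ∧ (G.endpoint.symm (nextPos p)).1 = d ∧
    G'.endpoint = G.endpoint.trans (Equiv.swap p (nextPos p)) ∧
    G'.sign = G.sign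

/-- `ArcShift G G' p c d` : `G'` is obtained from `G` by the arc-shift move at the
cyclically adjacent positions `p`, `p+1`, occupied by endpoints of the two distinct
chords `c` and `d`: the two endpoints are exchanged and the signs of `c` and `d`
are negated. -/
def ArcShift {n : ℕ} (G G' : GaussDiagram n) (p : Fin (2 * n)) (c d : Fin n) : Prop :=
  c ≠ d ∧ (G.endpoint.symm p).1 = c ∧ (G.endpoint.symm (nextPos p)).1 = d ∧
    G'.endpoint = G.endpoint.trans (Equiv.swap p (nextPos p)) ∧
    G'.sign = fun e => if e = c ∨ e = d then -G.sign e else G.sign e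

/-- `SignFlip G G' c` : `G'` is obtained from `G` by negating the sign of the chord `c`,
changing nothing else. -/
def SignFlip {n : ℕ} (G G' : GaussDiagram n) (c : Fin n) : Prop :=
  G'.endpoint = G.endpoint ∧ G'.sign = Function.update G.sign c (-G.sign c)

/-- An arc-shift move between Gauss diagrams (at some position, on some pair of chords). -/
def ArcShiftMove {n : ℕ} (G G' : GaussDiagram n) : Prop :=
  ∃ p c d, ArcShift G G' p c d

/-- A sign-flip move between Gauss diagrams (at some chord). -/
def SignFlipMove {n : ℕ} (G G' : GaussDiagram n) : Prop :=
  ∃ c, SignFlip G G' c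

/-- A move is either an arc-shift move or a sign-flip move. -/
def Move {n : ℕ} (G G' : GaussDiagram n) : Prop :=
  ArcShiftMove G G' ∨ SignFlipMove G G'

/-- A Gauss diagram is parallel if no two of its chords are interlinked. -/
def Parallel {n : ℕ} (G : GaussDiagram n) : Prop :=
  ∀ c d : Fin n, c ≠ d → ¬ Interlinked G c d

/-!
Transposing the endpoints at two adjacent positions `p`, `p + 1` preserves the cyclic order of
every triple of positions that does not contain both of them. Hence the interlinking of every
pair of chords other than `{c, d}` is unchanged. For `c` and `d` themselves, the endpoint of `c`
at `p` moves past the endpoint of `d` at `p + 1`: the chord of `c` now separates the two ends of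
`d` exactly when it did not before, and symmetrically. So the interlink counts of `c` and `d`
change by one and all other counts are unchanged.
-/

lemma Fin.val_sub_eq_ite {m : ℕ} (a x : Fin m) :
    (x - a).val = if a.val ≤ x.val then x.val - a.val else m + x.val - a.val := by
  split_ifs with h
  · exact Fin.coe_sub_iff_le.mpr h
  · exact Fin.coe_sub_iff_lt.mpr (not_le.mp h)

lemma val_nextPos {m : ℕ} (p : Fin m) :
    (nextPos p).val = p.val + 1 ∧ p.val + 1 < m ∨ (nextPos p).val = 0 ∧ p.val + 1 = m := by
  have := p.isLt
  rcases Nat.lt_or_ge (p.val + 1) m with h | h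
  · exact Or.inl ⟨Nat.mod_eq_of_lt h, h⟩
  · exact Or.inr ⟨by simp [nextPos, show p.val + 1 = m by omega], by omega⟩

section CyclicOrder

variable {m : ℕ} {p a b x y u v : Fin m}

lemma inside_iff_val :
    Inside a b x ↔
      0 < (if a.val ≤ x.val then x.val - a.val else m + x.val - a.val) ∧
        (if a.val ≤ x.val then x.val - a.val else m + x.val - a.val) <
          (if a.val ≤ b.val then b.val - a.val else m + b.val - a.val) := by
  rw [Inside, Fin.val_sub_eq_ite, Fin.val_sub_eq_ite]

lemma inside_comm_iff_not (hab : a ≠ b) (hax : a ≠ x) (hbx : b ≠ x) :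
    Inside b a x ↔ ¬ Inside a b x := by
  have := a.isLt; have := b.isLt; have := x.isLt
  rw [Ne, Fin.ext_iff] at hab hax hbx
  simp only [inside_iff_val]
  split_ifs <;> omega

lemma inside_nextPos_self (hbp : b ≠ p) (hbq : b ≠ nextPos p) : Inside p b (nextPos p) := by
  have := b.isLt; have := val_nextPos p
  rw [Ne, Fin.ext_iff] at hbp hbq
  rw [inside_iff_val]
  split_ifs <;> omega

lemma not_inside_nextPos_self : ¬ Inside (nextPos p) b p := by
  have := b.isLt; have := val_nextPos p
  rw [inside_iff_val]
  split_ifs <;> omega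

lemma inside_swap_nextPos_iff
    (h : ¬ ((a = p ∨ b = p ∨ x = p) ∧ (a = nextPos p ∨ b = nextPos p ∨ x = nextPos p))) :
    Inside (Equiv.swap p (nextPos p) a) (Equiv.swap p (nextPos p) b)
      (Equiv.swap p (nextPos p) x) ↔ Inside a b x := by
  have := a.isLt; have := b.isLt; have := x.isLt; have := val_nextPos p
  simp only [Equiv.swap_apply_def, Fin.ext_iff] at h ⊢
  split_ifs <;> simp only [inside_iff_val] <;> split_ifs <;> omega

lemma inside_nextPos_left_iff (hbp : b ≠ p) (hbq : b ≠ nextPos p) (hxp : x ≠ p)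
    (hxq : x ≠ nextPos p) : Inside (nextPos p) b x ↔ Inside p b x := by
  have := b.isLt; have := x.isLt; have := val_nextPos p
  rw [Ne, Fin.ext_iff] at hbp hbq hxp hxq
  simp only [inside_iff_val]
  split_ifs <;> omega

def Separates (a b x y : Fin m) : Prop :=
  Xor (Inside a b x) (Inside a b y)

lemma separates_comm_left (hab : a ≠ b) (hax : a ≠ x) (hbx : b ≠ x) (hay : a ≠ y) (hby : b ≠ y) :
    Separates b a x y ↔ Separates a b x y := by
  simp only [Separates, inside_comm_iff_not hab hax hbx, inside_comm_iff_not hab hay hby, xor_def]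
  tauto

lemma separates_comm_right : Separates a b y x ↔ Separates a b x y := by
  rw [Separates, Separates, xor_comm]

lemma separates_nextPos_iff_not (hup : u ≠ p) (huq : u ≠ nextPos p) (hvp : v ≠ p)
    (hvq : v ≠ nextPos p) : Separates (nextPos p) u p v ↔ ¬ Separates p u (nextPos p) v := by
  simp only [Separates, inside_nextPos_self hup huq, not_inside_nextPos_self,
    inside_nextPos_left_iff hup huq hvp hvq, xor_def]
  tauto

end CyclicOrder

lemma odd_card_iff_not_odd_card_of_erase_eq {α : Type*} [DecidableEq α] {s t : Finset α} {a : α}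
    (h : s.erase a = t.erase a) (ha : a ∈ s ↔ a ∉ t) : Odd s.card ↔ ¬ Odd t.card := by
  wlog hs : a ∈ s generalizing s t
  · have := this h.symm (by tauto) (by tauto)
    tauto
  rw [← Finset.card_erase_add_one hs, h, Finset.erase_eq_of_notMem (ha.mp hs), Nat.odd_add_one]

namespace GaussDiagram

variable {n : ℕ}

lemma interlinked_iff_separates (G : GaussDiagram n) {c d : Fin n} (hcd : c ≠ d) (s t : Bool) :
    Interlinked G c d ↔ Separates (G.endpoint (c, s)) (G.endpoint (c, !s))
      (G.endpoint (d, t)) (G.endpoint (d, !t)) := by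
  have hne : ∀ {y z : Fin n × Bool}, y.1 ≠ z.1 ∨ y.2 ≠ z.2 → G.endpoint y ≠ G.endpoint z :=
    fun h => G.endpoint.injective.ne fun e => by simp [e] at h
  have hleft (y : Bool) : Separates (G.endpoint (c, true)) (G.endpoint (c, false))
      (G.endpoint (d, y)) (G.endpoint (d, !y)) ↔ Separates (G.endpoint (c, false))
      (G.endpoint (c, true)) (G.endpoint (d, y)) (G.endpoint (d, !y)) :=
    separates_comm_left (hne (by simp)) (hne (.inl hcd)) (hne (.inl hcd)) (hne (.inl hcd))
      (hne (.inl hcd))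
  cases s <;> cases t
  · rfl
  · exact separates_comm_right.symm
  · exact (hleft false).symm
  · exact (hleft true).trans separates_comm_right |>.symm

end GaussDiagram

section OddChord

variable {n : ℕ}

lemma oddChord_iff_of_interlinked_iff {G G' : GaussDiagram n} {c : Fin n}
    (h : ∀ e, e ≠ c → (Interlinked G' c e ↔ Interlinked G c e)) :
    OddChord G' c ↔ OddChord G c := by
  unfold OddChord
  rw [Finset.filter_congr fun e _ => and_congr_right (h e)]

lemma oddChord_iff_not_of_interlinked_iff_not {G G' : GaussDiagram n} {c d : Fin n} (hdc : d ≠ c)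
    (hd : Interlinked G' c d ↔ ¬ Interlinked G c d)
    (h : ∀ e, e ≠ c → e ≠ d → (Interlinked G' c e ↔ Interlinked G c e)) :
    OddChord G' c ↔ ¬ OddChord G c := by
  unfold OddChord
  refine odd_card_iff_not_odd_card_of_erase_eq (a := d) ?_ (by simp [hdc, hd])
  ext e
  simp only [Finset.mem_erase, Finset.mem_filter, Finset.mem_univ, true_and]
  exact ⟨fun ⟨hed, hec, he⟩ => ⟨hed, hec, (h e hec hed).mp he⟩,
    fun ⟨hed, hec, he⟩ => ⟨hed, hec, (h e hec hed).mpr he⟩⟩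

end OddChord

namespace AdjSwap

variable {n : ℕ} {G G' : GaussDiagram n} {p : Fin (2 * n)} {c d : Fin n}

lemma endpoint_eq (h : AdjSwap G G' p c d) (z : Fin n × Bool) :
    G'.endpoint z = Equiv.swap p (nextPos p) (G.endpoint z) := by
  rw [h.2.2.2.1]
  rfl

lemma fst_eq_of_endpoint_eq_pos (h : AdjSwap G G' p c d) {z : Fin n × Bool}
    (hz : G.endpoint z = p) : z.1 = c := by
  rw [← h.2.1, ← hz, Equiv.symm_apply_apply]

lemma fst_eq_of_endpoint_eq_nextPos (h : AdjSwap G G' p c d) {z : Fin n × Bool}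
    (hz : G.endpoint z = nextPos p) : z.1 = d := by
  rw [← h.2.2.1, ← hz, Equiv.symm_apply_apply]

lemma interlinked_iff (h : AdjSwap G G' p c d) {e f : Fin n}
    (hef : e ≠ c ∧ e ≠ d ∨ f ≠ c ∧ f ≠ d) : Interlinked G' e f ↔ Interlinked G e f := by
  have hinside (i : Bool) : Inside (G'.endpoint (e, false)) (G'.endpoint (e, true))
      (G'.endpoint (f, i)) ↔ Inside (G.endpoint (e, false)) (G.endpoint (e, true))
      (G.endpoint (f, i)) := by
    simp only [h.endpoint_eq]
    refine inside_swap_nextPos_iff ?_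
    rintro ⟨hp, hq⟩
    -- the endpoints at `p` and `p + 1` would make both `c` and `d` members of `{e, f}`
    have hcd := h.1
    rcases hp with hp | hp | hp <;> have hc := h.fst_eq_of_endpoint_eq_pos hp <;>
      rcases hq with hq | hq | hq <;> have hd := h.fst_eq_of_endpoint_eq_nextPos hq <;>
      grind
  simp only [Interlinked, hinside]

lemma interlinked_iff_not (h : AdjSwap G G' p c d) :
    (Interlinked G' c d ↔ ¬ Interlinked G c d) ∧ (Interlinked G' d c ↔ ¬ Interlinked G d c) := by
  have hcd := h.1
  set s := (G.endpoint.symm p).2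
  set t := (G.endpoint.symm (nextPos p)).2
  have hs : G.endpoint (c, s) = p := by rw [← h.2.1, Prod.mk.eta, Equiv.apply_symm_apply]
  have ht : G.endpoint (d, t) = nextPos p := by
    rw [← h.2.2.1, Prod.mk.eta, Equiv.apply_symm_apply]
  obtain ⟨u, hu⟩ : ∃ u, G.endpoint (c, !s) = u := ⟨_, rfl⟩
  obtain ⟨v, hv⟩ : ∃ v, G.endpoint (d, !t) = v := ⟨_, rfl⟩
  have hup : u ≠ p := hu ▸ hs ▸ G.endpoint.injective.ne (by simp)
  have huq : u ≠ nextPos p := hu ▸ ht ▸ G.endpoint.injective.ne (by simp [hcd])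
  have hvp : v ≠ p := hv ▸ hs ▸ G.endpoint.injective.ne (by simp [hcd.symm])
  have hvq : v ≠ nextPos p := hv ▸ ht ▸ G.endpoint.injective.ne (by simp)
  rw [G'.interlinked_iff_separates hcd s t, G.interlinked_iff_separates hcd s t,
    G'.interlinked_iff_separates hcd.symm t s, G.interlinked_iff_separates hcd.symm t s]
  simp only [h.endpoint_eq, hs, ht, hu, hv, Equiv.swap_apply_left, Equiv.swap_apply_right,
    Equiv.swap_apply_of_ne_of_ne hup huq, Equiv.swap_apply_of_ne_of_ne hvp hvq]
  exact ⟨separates_nextPos_iff_not hup huq hvp hvq,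
    iff_not_comm.mp (separates_nextPos_iff_not hvp hvq hup huq)⟩

end AdjSwap

theorem adjSwap_parity_general {n : ℕ} (G G' : GaussDiagram n)
    (p : Fin (2 * n)) (c d : Fin n) (h : AdjSwap G G' p c d) :
    (OddChord G' c ↔ ¬ OddChord G c) ∧
      (OddChord G' d ↔ ¬ OddChord G d) ∧
      ∀ e : Fin n, e ≠ c → e ≠ d → (OddChord G' e ↔ OddChord G e) :=
  ⟨oddChord_iff_not_of_interlinked_iff_not h.1.symm h.interlinked_iff_not.1
      fun _ hec hed => h.interlinked_iff (.inr ⟨hec, hed⟩),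
    oddChord_iff_not_of_interlinked_iff_not h.1 h.interlinked_iff_not.2
      fun _ hed hec => h.interlinked_iff (.inr ⟨hec, hed⟩),
    fun _ hec hed =>
      oddChord_iff_of_interlinked_iff fun _ _ => h.interlinked_iff (.inl ⟨hec, hed⟩)⟩

/-- an adjacent endpoint swap involving the two distinct chords `c` and `d`
flips the parity of `c` and of `d` and preserves the parity of every other chord. -/
theorem adjSwap_parity {n : ℕ} (hn : 1 ≤ n) (G G' : GaussDiagram n)
    (p : Fin (2 * n)) (c d : Fin n) (h : AdjSwap G G' p c d) :
    (OddChord G' c ↔ ¬ OddChord G c) ∧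
      (OddChord G' d ↔ ¬ OddChord G d) ∧
      ∀ e : Fin n, e ≠ c → e ≠ d → (OddChord G' e ↔ OddChord G e) :=
  adjSwap_parity_general G G' p c d h
end

section
/- Let G be a combinatorial Gauss diagram and let G' be obtained from G by a single arc-shift move. Then J(G') − J(G) ∈ {−2, 0, 2}, i.e., either J(G') = J(G) or J(G') = J(G) ± 2. -/
open scoped Classical

/-!
Swapping the endpoints at two adjacent positions `p`, `p + 1` preserves the cyclic orientation
of every triple of positions that does not contain both of them, and reverses it on a triple
that does (there the swap acts as a transposition of the triple). Hence the move toggles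
exactly one interlinking relation, the one between `c` and `d`: the parities of `c` and `d`
flip and no other parity changes. An odd chord with negated sign and an even chord with negated
sign both change their contribution to the odd writhe by `-ε`, so the writhe changes by
`-(ε(c) + ε(d)) ∈ {-2, 0, 2}`.
-/

open scoped Finset

theorem Equiv.swap_apply_cases {α : Type*} [DecidableEq α] (p q y : α) :
    y = p ∧ swap p q y = q ∨ y = q ∧ swap p q y = p ∨ y ≠ p ∧ y ≠ q ∧ swap p q y = y := by
  by_cases hp : y = p
  · subst hp; simp
  by_cases hq : y = q
  · subst hq; simp
  exact Or.inr (Or.inr ⟨hp, hq, swap_apply_of_ne_of_ne hp hq⟩)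

theorem Finset.odd_card_filter_iff_not_of_xor {α : Type*} [Fintype α] {P Q : α → Prop}
    [DecidablePred P] [DecidablePred Q] (a : α) (h : ∀ x, P x ↔ Xor (Q x) (x = a)) :
    Odd #{x | P x} ↔ ¬ Odd #{x | Q x} := by
  by_cases ha : Q a
  · have hP : ({x | P x} : Finset α) = ({x | Q x} : Finset α).erase a := by
      ext x; by_cases hx : x = a <;> simp [h, hx, ha, xor_def]
    rw [hP, ← card_erase_add_one (s := {x | Q x}) (by simpa using ha), Nat.odd_add_one, not_not]
  · have hP : ({x | P x} : Finset α) = insert a ({x | Q x} : Finset α) := by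
      ext x; by_cases hx : x = a <;> simp [h, hx, ha, xor_def]
    rw [hP, card_insert_of_notMem (by simpa using ha), Nat.odd_add_one]

section CyclicOrder
variable {m : ℕ}

theorem inside_iff_lt (a b x : Fin m) :
    Inside a b x ↔ a < x ∧ x < b ∨ x < b ∧ b < a ∨ b < a ∧ a < x := by
  have hsub (u v : Fin m) :
      ((u - v : Fin m) : ℕ) = if v ≤ u then u.val - v.val else m + u - v := by
    split_ifs with h
    · exact Fin.sub_val_of_le h
    · exact Fin.coe_sub_iff_lt.2 (not_le.1 h)
  simp only [Inside, hsub, Fin.lt_def, Fin.le_def]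
  have := x.isLt; have := a.isLt; have := b.isLt
  split_ifs <;> omega

theorem val_nextPos_eq_or (p : Fin m) :
    (nextPos p).val = p.val + 1 ∨ p.val + 1 = m ∧ (nextPos p).val = 0 := by
  have := p.isLt
  by_cases h : p.val + 1 = m
  · simp [nextPos, h]
  · exact Or.inl (Nat.mod_eq_of_lt (by omega))

theorem inside_swap_nextPos {p a b x : Fin m} (hab : a ≠ b) (hax : a ≠ x) (hbx : b ≠ x) :
    Inside (Equiv.swap p (nextPos p) a) (Equiv.swap p (nextPos p) b)
        (Equiv.swap p (nextPos p) x) ↔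
      Xor (Inside a b x)
        ((p = a ∨ p = b ∨ p = x) ∧ (nextPos p = a ∨ nextPos p = b ∨ nextPos p = x)) := by
  have hq := val_nextPos_eq_or p
  have hpq : p ≠ nextPos p := by
    have := a.isLt; have := b.isLt; have := Fin.val_ne_of_ne hab
    intro h; rw [Fin.ext_iff] at h; omega
  generalize nextPos p = q at hq hpq ⊢
  rcases Equiv.swap_apply_cases p q a with ⟨ha, ha'⟩ | ⟨ha, ha'⟩ | ⟨ha₁, ha₂, ha'⟩ <;>
  rcases Equiv.swap_apply_cases p q b with ⟨hb, hb'⟩ | ⟨hb, hb'⟩ | ⟨hb₁, hb₂, hb'⟩ <;>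
  rcases Equiv.swap_apply_cases p q x with ⟨hx, hx'⟩ | ⟨hx, hx'⟩ | ⟨hx₁, hx₂, hx'⟩ <;>
  rw [ha', hb', hx'] <;>
  simp_all [Ne.symm, Xor] <;>
  simp only [inside_iff_lt, Fin.lt_def, Fin.ext_iff] at * <;>
  have := x.isLt <;> have := a.isLt <;> have := b.isLt <;> have := p.isLt <;>
  omega

end CyclicOrder

section AdjacentSwap
variable {n : ℕ} {G G' : GaussDiagram n} {p : Fin (2 * n)} {c d : Fin n}

theorem interlinked_iff_xor_of_swap (hcd : c ≠ d) (hc : (G.endpoint.symm p).1 = c)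
    (hd : (G.endpoint.symm (nextPos p)).1 = d)
    (hE : G'.endpoint = G.endpoint.trans (Equiv.swap p (nextPos p))) {e f : Fin n}
    (hef : e ≠ f) :
    Interlinked G' e f ↔ Xor (Interlinked G e f) (e = c ∧ f = d ∨ e = d ∧ f = c) := by
  have hne {u v : Fin n × Bool} (huv : u ≠ v) : G.endpoint u ≠ G.endpoint v :=
    G.endpoint.injective.ne huv
  simp only [Interlinked, hE, Equiv.trans_apply]
  show Xor _ _ ↔ Xor (Xor _ _) _
  rw [inside_swap_nextPos (hne (by simp)) (hne (by simp [hef])) (hne (by simp [hef])),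
    inside_swap_nextPos (hne (by simp)) (hne (by simp [hef])) (hne (by simp [hef]))]
  obtain ⟨s, hs⟩ : ∃ s, G.endpoint (c, s) = p := ⟨(G.endpoint.symm p).2, by simp [← hc]⟩
  obtain ⟨t, ht⟩ : ∃ t, G.endpoint (d, t) = nextPos p :=
    ⟨(G.endpoint.symm (nextPos p)).2, by simp [← hd]⟩
  rw [← ht, ← hs]
  simp only [EmbeddingLike.apply_eq_iff_eq, Prod.mk.injEq]
  cases s <;> cases t <;> simp [Xor] <;> grind

theorem oddChord_iff_xor_of_swap (hcd : c ≠ d) (hc : (G.endpoint.symm p).1 = c)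
    (hd : (G.endpoint.symm (nextPos p)).1 = d)
    (hE : G'.endpoint = G.endpoint.trans (Equiv.swap p (nextPos p))) (e : Fin n) :
    OddChord G' e ↔ Xor (OddChord G e) (e = c ∨ e = d) := by
  have hlink {f : Fin n} (hfe : f ≠ e) := interlinked_iff_xor_of_swap hcd hc hd hE hfe.symm
  by_cases he : e = c ∨ e = d
  · obtain ⟨a, hae, ha⟩ : ∃ a, a ≠ e ∧ ∀ f, (e = c ∧ f = d ∨ e = d ∧ f = c) ↔ f = a := by
      rcases he with rfl | rfl
      · exact ⟨d, hcd.symm, by simp⟩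
      · exact ⟨c, hcd, by simp⟩
    simp only [OddChord, he, xor_def, not_true_eq_false, and_false, true_and, false_or]
    refine Finset.odd_card_filter_iff_not_of_xor (P := fun f => f ≠ e ∧ Interlinked G' e f)
      (Q := fun f => f ≠ e ∧ Interlinked G e f) a fun f => ?_
    by_cases hfe : f = e
    · simp [hfe, hae.symm]
    · simp [hfe, hlink hfe, ha, xor_def]
  · obtain ⟨hec, hed⟩ := not_or.1 he
    simp only [OddChord, he, xor_def, not_false_eq_true, and_true, false_and, or_false]
    congr! 3 with f
    exact and_congr_right fun hfe => by simp [hlink hfe, hec, hed, xor_def]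

theorem ArcShift.oddWrithe_sub (h : ArcShift G G' p c d) :
    oddWrithe G' - oddWrithe G = -(G.sign c + G.sign d) := by
  obtain ⟨hcd, hc, hd, hE, hs⟩ := h
  have hterm (e : Fin n) :
      ((if OddChord G' e then G'.sign e else 0) - if OddChord G e then G.sign e else 0) =
        if e ∈ ({c, d} : Finset (Fin n)) then -G.sign e else 0 := by
    rw [oddChord_iff_xor_of_swap hcd hc hd hE, hs]
    by_cases he : e = c ∨ e = d <;> by_cases ho : OddChord G e <;> simp [he, ho, xor_def]
  simp only [oddWrithe, Finset.sum_filter, ← Finset.sum_sub_distrib, hterm,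
    Finset.sum_ite_mem, Finset.univ_inter, Finset.sum_pair hcd, neg_add]

end AdjacentSwap

theorem arcShift_oddWrithe_diff_general {n : ℕ} (G G' : GaussDiagram n)
    (p : Fin (2 * n)) (c d : Fin n) (h : ArcShift G G' p c d) :
    oddWrithe G' - oddWrithe G ∈ ({-2, 0, 2} : Set ℤ) := by
  rw [h.oddWrithe_sub]
  rcases G.sign_pm c with hc | hc <;> rcases G.sign_pm d with hd | hd <;> simp [hc, hd]

/-- a single arc-shift move changes the odd writhe by `-2`, `0`, or `2`. -/
theorem arcShift_oddWrithe_diff {n : ℕ} (hn : 1 ≤ n) (G G' : GaussDiagram n)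
    (p : Fin (2 * n)) (c d : Fin n) (h : ArcShift G G' p c d) :
    oddWrithe G' - oddWrithe G ∈ ({-2, 0, 2} : Set ℤ) :=
  arcShift_oddWrithe_diff_general G G' p c d h
end

section
/- Every combinatorial Gauss diagram can be transformed into a parallel Gauss diagram (one in which no two chords are interlinked) by a finite sequence of arc-shift moves. -/
open scoped Classical

/-!
Read the positions `0, …, 2n-1` of a Gauss diagram as a word in the chords. An arc-shift move
at a descent of this word (an adjacent pair of positions, not across the wrap-around, whose chords
are out of order) is bubble sort's transposition, and it strictly lowers the weight
`∑ p, (2n - 1 - p) * chord(p)`, so finitely many moves make the word sorted. In a sorted word the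
two endpoints of every chord sit at consecutive positions, and such a chord is interlinked with
no other: the cyclic interval between its endpoints contains either no point or all the others.
-/

section Word

variable {m : ℕ}

def positionWeight (w : Fin m → ℕ) : ℕ :=
  ∑ p, p.rev.val * w p

lemma positionWeight_comp_swap_lt {w : Fin m → ℕ} {i j : Fin m} (hij : j.val = i.val + 1)
    (hw : w j < w i) : positionWeight (w ∘ Equiv.swap i j) < positionWeight w := by
  have hne : i ≠ j := Fin.ne_of_val_ne (by omega)
  have hrev : i.rev.val = j.rev.val + 1 := by simp only [Fin.val_rev]; omega
  have hrest : ∑ p ∈ ({i, j} : Finset (Fin m))ᶜ, p.rev.val * (w ∘ Equiv.swap i j) p =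
      ∑ p ∈ ({i, j} : Finset (Fin m))ᶜ, p.rev.val * w p := by
    refine Finset.sum_congr rfl fun p hp => ?_
    simp only [Finset.mem_compl, Finset.mem_insert, Finset.mem_singleton, not_or] at hp
    simp [Equiv.swap_apply_of_ne_of_ne hp.1 hp.2]
  unfold positionWeight
  rw [← Finset.sum_add_sum_compl {i, j}, ← Finset.sum_add_sum_compl {i, j} (fun p => _ * w p),
    hrest, Finset.sum_pair hne, Finset.sum_pair hne]
  simp only [Function.comp_apply, Equiv.swap_apply_left, Equiv.swap_apply_right, hrev]
  nlinarith

lemma exists_descent_of_not_monotone {α : Type*} [LinearOrder α] {w : Fin m → α}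
    (hw : ¬ Monotone w) : ∃ i j : Fin m, j.val = i.val + 1 ∧ w j < w i := by
  obtain _ | k := m
  · exact absurd (Subsingleton.monotone w) hw
  contrapose! hw
  exact Fin.monotone_iff_le_succ.mpr fun i => hw _ _ (by simp)

lemma nextPos_eq_of_val_eq_succ {p q : Fin m} (h : q.val = p.val + 1) : nextPos p = q :=
  Fin.ext (by simp [nextPos, ← h, Nat.mod_eq_of_lt q.isLt])

lemma not_inside_of_val_eq_succ {a b : Fin m} (h : b.val = a.val + 1) (x : Fin m) :
    ¬ Inside a b x := by
  have hba : (b - a).val = 1 := by rw [Fin.coe_sub_iff_le.mpr (by rw [Fin.le_def]; omega)]; omega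
  unfold Inside
  omega

lemma inside_of_val_eq_succ {a b x : Fin m} (h : a.val = b.val + 1) (hxa : x ≠ a) (hxb : x ≠ b) :
    Inside a b x := by
  have : NeZero m := ⟨a.pos.ne'⟩
  have hba : (b - a).val = m - 1 := by
    rw [Fin.coe_sub_iff_lt.mpr (by rw [Fin.lt_def]; omega)]; omega
  have hxa' : (x - a).val ≠ 0 := fun h0 => hxa (sub_eq_zero.mp (Fin.ext h0))
  have hxb' : (x - a).val ≠ (b - a).val := fun h0 => hxb (sub_left_inj.mp (Fin.ext h0))
  have := (x - a).isLt
  exact ⟨by omega, by omega⟩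

end Word

namespace GaussDiagram

variable {n : ℕ}

def chordAt (G : GaussDiagram n) (p : Fin (2 * n)) : Fin n :=
  (G.endpoint.symm p).1

lemma chordAt_endpoint (G : GaussDiagram n) (c : Fin n) (b : Bool) :
    G.chordAt (G.endpoint (c, b)) = c := by
  simp [chordAt]

lemma eq_or_eq_or_eq_of_chordAt_eq (G : GaussDiagram n) {p q r : Fin (2 * n)}
    (hq : G.chordAt q = G.chordAt p) (hr : G.chordAt r = G.chordAt p) :
    q = p ∨ r = p ∨ q = r := by
  have key : ∀ x y, G.chordAt x = G.chordAt y →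
      (G.endpoint.symm x).2 = (G.endpoint.symm y).2 → x = y :=
    fun x y h1 h2 => G.endpoint.symm.injective (Prod.ext h1 h2)
  -- three positions on one chord cannot carry three distinct `Bool` labels
  cases hp : (G.endpoint.symm p).2 <;> cases hq' : (G.endpoint.symm q).2 <;>
    cases hr' : (G.endpoint.symm r).2 <;> grind

lemma val_eq_succ_of_monotone_chordAt {G : GaussDiagram n} (hG : Monotone G.chordAt)
    {u v : Fin (2 * n)} (huv : u < v) (h : G.chordAt v = G.chordAt u) : v.val = u.val + 1 := by
  by_contra hne
  let q : Fin (2 * n) := ⟨u.val + 1, by omega⟩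
  have huq : u < q := Fin.lt_def.mpr (Nat.lt_succ_self _)
  have hqv : q < v := Fin.lt_def.mpr (show u.val + 1 < v.val by rw [Fin.lt_def] at huv; omega)
  have hq : G.chordAt q = G.chordAt u := le_antisymm (h ▸ hG hqv.le) (hG huq.le)
  rcases G.eq_or_eq_or_eq_of_chordAt_eq hq h with h' | h' | h'
  exacts [huq.ne' h', huv.ne' h', hqv.ne h']

lemma endpoint_adjacent_of_monotone_chordAt {G : GaussDiagram n} (hG : Monotone G.chordAt)
    (c : Fin n) :
    (G.endpoint (c, true)).val = (G.endpoint (c, false)).val + 1 ∨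
      (G.endpoint (c, false)).val = (G.endpoint (c, true)).val + 1 := by
  have hne : G.endpoint (c, false) ≠ G.endpoint (c, true) := by simp
  have hchord : G.chordAt (G.endpoint (c, true)) = G.chordAt (G.endpoint (c, false)) := by
    simp only [chordAt_endpoint]
  rcases hne.lt_or_gt with hlt | hlt
  · exact .inl (val_eq_succ_of_monotone_chordAt hG hlt hchord)
  · exact .inr (val_eq_succ_of_monotone_chordAt hG hlt hchord.symm)

lemma not_interlinked_of_endpoint_adjacent (G : GaussDiagram n) {c d : Fin n} (hcd : c ≠ d)
    (hadj : (G.endpoint (c, true)).val = (G.endpoint (c, false)).val + 1 ∨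
      (G.endpoint (c, false)).val = (G.endpoint (c, true)).val + 1) :
    ¬ Interlinked G c d := by
  rcases hadj with h | h
  · rintro (⟨hin, -⟩ | ⟨hin, -⟩) <;> exact not_inside_of_val_eq_succ h _ hin
  · have hd : ∀ b b', G.endpoint (d, b) ≠ G.endpoint (c, b') := by simp [hcd.symm]
    rintro (⟨-, hout⟩ | ⟨-, hout⟩) <;> exact hout (inside_of_val_eq_succ h (hd _ _) (hd _ _))

lemma parallel_of_monotone_chordAt {G : GaussDiagram n} (hG : Monotone G.chordAt) :
    Parallel G :=
  fun _ _ hcd => G.not_interlinked_of_endpoint_adjacent hcd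
    (endpoint_adjacent_of_monotone_chordAt hG _)

def arcShiftAt (G : GaussDiagram n) (p : Fin (2 * n)) : GaussDiagram n where
  endpoint := G.endpoint.trans (Equiv.swap p (nextPos p))
  sign e := if e = G.chordAt p ∨ e = G.chordAt (nextPos p) then -G.sign e else G.sign e
  sign_pm e := by
    split_ifs
    · exact (G.sign_pm e).symm.imp neg_eq_iff_eq_neg.mpr (by simp)
    · exact G.sign_pm e

lemma arcShift_arcShiftAt (G : GaussDiagram n) (p : Fin (2 * n))
    (h : G.chordAt p ≠ G.chordAt (nextPos p)) :
    ArcShift G (G.arcShiftAt p) p (G.chordAt p) (G.chordAt (nextPos p)) :=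
  ⟨h, rfl, rfl, rfl, rfl⟩

lemma chordAt_arcShiftAt (G : GaussDiagram n) (p : Fin (2 * n)) :
    (G.arcShiftAt p).chordAt = G.chordAt ∘ Equiv.swap p (nextPos p) := by
  funext x
  simp [chordAt, arcShiftAt, Equiv.symm_swap]

def weight (G : GaussDiagram n) : ℕ :=
  positionWeight fun p => (G.chordAt p).val

theorem exists_arcShiftMove_monotone_chordAt (G : GaussDiagram n) :
    ∃ G', Relation.ReflTransGen ArcShiftMove G G' ∧ Monotone G'.chordAt := by
  by_cases hG : Monotone G.chordAt
  · exact ⟨G, .refl, hG⟩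
  obtain ⟨i, j, hij, hdesc⟩ := exists_descent_of_not_monotone hG
  have hnext : nextPos i = j := nextPos_eq_of_val_eq_succ hij
  have hmove : ArcShiftMove G (G.arcShiftAt i) := ⟨i, _, _, G.arcShift_arcShiftAt i (hnext ▸ hdesc.ne')⟩
  have hdecr : (G.arcShiftAt i).weight < G.weight := by
    rw [weight, chordAt_arcShiftAt, hnext]
    exact positionWeight_comp_swap_lt (w := fun p => (G.chordAt p).val) hij hdesc
  obtain ⟨G', hG', hmono⟩ := (G.arcShiftAt i).exists_arcShiftMove_monotone_chordAt
  exact ⟨G', .head hmove hG', hmono⟩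
termination_by G.weight

end GaussDiagram

theorem exists_parallel_of_arcShift_moves_general {n : ℕ} (G : GaussDiagram n) :
    ∃ G' : GaussDiagram n,
      Relation.ReflTransGen (fun H H' => ArcShiftMove H H') G G' ∧ Parallel G' := by
  obtain ⟨G', hG', hmono⟩ := G.exists_arcShiftMove_monotone_chordAt
  exact ⟨G', hG', GaussDiagram.parallel_of_monotone_chordAt hmono⟩

/-- every combinatorial Gauss diagram can be transformed into a parallel
Gauss diagram by a finite sequence of arc-shift moves. -/
theorem exists_parallel_of_arcShift_moves {n : ℕ} (hn : 1 ≤ n) (G : GaussDiagram n) :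
    ∃ G' : GaussDiagram n,
      Relation.ReflTransGen (fun H H' => ArcShiftMove H H') G G' ∧ Parallel G' :=
  exists_parallel_of_arcShift_moves_general G
end
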